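/- arXiv:nlin/0108010 — 3 statements merged into one kernel-verified Lean document; each statement's English description precedes it below -/
import Mathlib

section
/- Let α ∈ ℂ and let (a_n)_{n≥0} be defined by a_0 = 1 and a_{n+1} = (3n+1)(3n+2)·a_n − 2α²·Σ_{k+l+m=n} a_k·a_l·a_m. For N ≥ 1 define the truncated series y⁽ᴺ⁾(x) = α·Σ_{n=0}^{N−1} a_n·x^{−3n−1} for x ≠ 0. Then y⁽ᴺ⁾ formally solves the second Painlevé equation up to order x^{−3N}: there is a constant c_N such that |(y⁽ᴺ⁾)''(x) − 2·y⁽ᴺ⁾(x)³ − x·y⁽ᴺ⁾(x) + α| ≤ c_N·|x|^{−3N} for all |x| ≥ 1. -/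
/-!
Put `t = x⁻³` and `A = Σ aₙ tⁿ` (truncated below degree `N`). Then `y⁽ᴺ⁾ = α x⁻¹ A(t)` and
`(y⁽ᴺ⁾)'' = α t B(t)` with `B = Σ (3n+1)(3n+2) aₙ tⁿ`, so the P2 residual equals `α F(t)` for the
polynomial `F = t B − 2α² t A³ − A + 1`. The recursion for `aₙ` says exactly that the coefficients
of `F` below degree `N` vanish, so `F = t^N G`, and `G` is bounded on the unit disc `‖t‖ ≤ 1`.
-/

/-- The truncated asymptotic series `y⁽ᴺ⁾(x) = α·Σ_{n=0}^{N−1} a_n·x^{−3n−1}`. -/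
noncomputable def truncatedP2Series (α : ℂ) (a : ℕ → ℂ) (N : ℕ) (x : ℂ) : ℂ :=
  α * ∑ n ∈ Finset.range N, a n * x ^ (-(3 * (n : ℤ)) - 1)

open Finset Polynomial

section LaurentSum

variable {𝕜 ι : Type*} [NontriviallyNormedField 𝕜] (s : Finset ι) (c : ι → 𝕜) (m : ι → ℤ)
  {x : 𝕜}

theorem deriv_sum_mul_zpow (hx : x ≠ 0) :
    deriv (fun y => ∑ i ∈ s, c i * y ^ m i) x = ∑ i ∈ s, c i * m i * x ^ (m i - 1) := by
  simp_rw [mul_assoc]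
  exact (HasDerivAt.fun_sum fun i _ =>
    (hasDerivAt_zpow (m i) x (.inl hx)).const_mul (c i)).deriv

theorem deriv_deriv_sum_mul_zpow (hx : x ≠ 0) :
    deriv (deriv fun y => ∑ i ∈ s, c i * y ^ m i) x =
      ∑ i ∈ s, c i * m i * (m i - 1) * x ^ (m i - 2) := by
  have hderiv : deriv (fun y => ∑ i ∈ s, c i * y ^ m i) =ᶠ[nhds x]
      fun y => ∑ i ∈ s, c i * m i * y ^ (m i - 1) :=
    (eventually_ne_nhds hx).mono fun y hy => deriv_sum_mul_zpow s c m hy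
  rw [hderiv.deriv_eq, deriv_sum_mul_zpow s _ _ hx]
  push_cast
  simp_rw [sub_sub, one_add_one_eq_two]

end LaurentSum

section SeriesInInverseCube

variable {K : Type*} [Field K]

theorem sum_mul_zpow_eq_eval_trunc (b : ℕ → K) (N k : ℕ) (x : K) :
    ∑ n ∈ range N, b n * x ^ (-(3 * (n : ℤ)) - k) =
      x⁻¹ ^ k * (PowerSeries.trunc N (PowerSeries.mk b)).eval (x⁻¹ ^ 3) := by
  rw [eval, PowerSeries.eval₂_trunc_eq_sum_range, mul_sum]
  refine sum_congr rfl fun n _ => ?_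
  rw [show -(3 * (n : ℤ)) - k = -((k + 3 * n : ℕ) : ℤ) by push_cast; ring, zpow_neg,
    zpow_natCast, ← inv_pow, pow_add, pow_mul, PowerSeries.coeff_mk, RingHom.id_apply]
  ring

end SeriesInInverseCube

theorem Polynomial.coeff_pow_three {R : Type*} [CommSemiring R] (p : R[X]) (i : ℕ) :
    (p ^ 3).coeff i = ∑ k ∈ range (i + 1), ∑ l ∈ range (i + 1 - k),
      p.coeff k * p.coeff l * p.coeff (i - k - l) := by
  rw [pow_three, coeff_mul, Nat.sum_antidiagonal_eq_sum_range_succ_mk]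
  refine sum_congr rfl fun k _ => ?_
  rw [coeff_mul, Nat.sum_antidiagonal_eq_sum_range_succ_mk, mul_sum]
  dsimp only
  rw [show (i - k).succ = i + 1 - k by grind]
  simp_rw [mul_assoc]

theorem coeff_trunc_mk_pow_three {R : Type*} [CommSemiring R] (b : ℕ → R) {N i : ℕ} (hi : i < N) :
    (PowerSeries.trunc N (.mk b) ^ 3).coeff i =
      ∑ k ∈ range (i + 1), ∑ l ∈ range (i + 1 - k), b k * b l * b (i - k - l) := by
  rw [coeff_pow_three]
  refine sum_congr rfl fun k hk => sum_congr rfl fun l hl => ?_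
  simp only [mem_range] at hk hl
  simp only [PowerSeries.coeff_trunc, PowerSeries.coeff_mk]
  rw [if_pos (by omega), if_pos (by omega), if_pos (by omega)]

theorem Polynomial.exists_norm_eval_le_mul_pow_of_X_pow_dvd {K : Type*} [NontriviallyNormedField K]
    [ProperSpace K] {F : K[X]} {N : ℕ} (hF : X ^ N ∣ F) :
    ∃ c : ℝ, ∀ t : K, ‖t‖ ≤ 1 → ‖F.eval t‖ ≤ c * ‖t‖ ^ N := by
  obtain ⟨G, rfl⟩ := hF
  obtain ⟨c, hc⟩ := (isCompact_closedBall (0 : K) 1).exists_bound_of_continuousOn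
    G.continuous.continuousOn
  refine ⟨c, fun t ht => ?_⟩
  rw [eval_mul, eval_pow, eval_X, norm_mul, norm_pow, mul_comm]
  exact mul_le_mul_of_nonneg_right (hc t (by simpa using ht)) (by positivity)

noncomputable def p2ResidualPoly (α : ℂ) (a : ℕ → ℂ) (N : ℕ) : ℂ[X] :=
  X * PowerSeries.trunc N (.mk fun n => (3 * (n : ℂ) + 1) * (3 * (n : ℂ) + 2) * a n) -
    C (2 * α ^ 2) * X * PowerSeries.trunc N (.mk a) ^ 3 - PowerSeries.trunc N (.mk a) + 1

section ResidualInInverseCube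

open PowerSeries

variable (α : ℂ) (a : ℕ → ℂ) (N : ℕ)

theorem truncatedP2Series_eq_eval (x : ℂ) :
    truncatedP2Series α a N x = α * (x⁻¹ * (trunc N (mk a)).eval (x⁻¹ ^ 3)) := by
  have h := sum_mul_zpow_eq_eval_trunc a N 1 x
  rw [Nat.cast_one, pow_one] at h
  rw [truncatedP2Series, h]

theorem deriv_deriv_truncatedP2Series {x : ℂ} (hx : x ≠ 0) :
    deriv (deriv (truncatedP2Series α a N)) x = α * (x⁻¹ ^ 3 *
      (trunc N (mk fun n => (3 * (n : ℂ) + 1) * (3 * (n : ℂ) + 2) * a n)).eval (x⁻¹ ^ 3)) := by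
  have hseries : truncatedP2Series α a N =
      fun y => ∑ n ∈ range N, α * a n * y ^ (-(3 * (n : ℤ)) - 1) := by
    ext y
    simp only [truncatedP2Series, mul_sum, mul_assoc]
  rw [hseries, deriv_deriv_sum_mul_zpow _ _ _ hx, ← sum_mul_zpow_eq_eval_trunc, mul_sum]
  refine sum_congr rfl fun n _ => ?_
  rw [show -(3 * (n : ℤ)) - 1 - 2 = -(3 * (n : ℤ)) - (3 : ℕ) by ring]
  push_cast
  ring

theorem truncatedP2Series_residual_eq_eval {x : ℂ} (hx : x ≠ 0) :
    deriv (deriv (truncatedP2Series α a N)) x - 2 * truncatedP2Series α a N x ^ 3 -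
        x * truncatedP2Series α a N x + α =
      α * (p2ResidualPoly α a N).eval (x⁻¹ ^ 3) := by
  simp only [deriv_deriv_truncatedP2Series α a N hx, truncatedP2Series_eq_eval, p2ResidualPoly,
    eval_add, eval_sub, eval_mul, eval_pow, eval_C, eval_X, eval_one]
  linear_combination (-(α * (trunc N (mk a)).eval (x⁻¹ ^ 3))) * mul_inv_cancel₀ hx

end ResidualInInverseCube

theorem coeff_p2ResidualPoly_eq_zero {α : ℂ} {a : ℕ → ℂ} (ha0 : a 0 = 1)
    (harec : ∀ n : ℕ, a (n + 1) =
      (3 * (n : ℂ) + 1) * (3 * (n : ℂ) + 2) * a n -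
        2 * α ^ 2 * ∑ k ∈ Finset.range (n + 1), ∑ l ∈ Finset.range (n + 1 - k),
          a k * a l * a (n - k - l))
    {N d : ℕ} (hd : d < N) :
    (p2ResidualPoly α a N).coeff d = 0 := by
  simp only [p2ResidualPoly, coeff_add, coeff_sub, mul_assoc, coeff_C_mul, coeff_one]
  cases d with
  | zero => simp [PowerSeries.coeff_trunc, hd, ha0]
  | succ n =>
    rw [coeff_X_mul, coeff_X_mul, coeff_trunc_mk_pow_three a (by omega : n < N)]
    simp only [PowerSeries.coeff_trunc, PowerSeries.coeff_mk, if_pos hd, if_pos (by omega : n < N),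
      Nat.add_one_ne_zero, if_false, harec n]
    ring

theorem truncatedP2Series_formal_solution_general (α : ℂ)
    (a : ℕ → ℂ) (ha0 : a 0 = 1)
    (harec : ∀ n : ℕ, a (n + 1) =
      (3 * (n : ℂ) + 1) * (3 * (n : ℂ) + 2) * a n -
        2 * α ^ 2 * ∑ k ∈ Finset.range (n + 1), ∑ l ∈ Finset.range (n + 1 - k),
          a k * a l * a (n - k - l))
    (N : ℕ) :
    ∃ c : ℝ, ∀ x : ℂ, 1 ≤ ‖x‖ →
      ‖deriv (deriv (truncatedP2Series α a N)) x -
          2 * (truncatedP2Series α a N x) ^ 3 -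
          x * truncatedP2Series α a N x + α‖ ≤
        c * ‖x‖ ^ (-(3 * (N : ℤ))) := by
  obtain ⟨c, hc⟩ := exists_norm_eval_le_mul_pow_of_X_pow_dvd
    (X_pow_dvd_iff.2 fun d => coeff_p2ResidualPoly_eq_zero (N := N) ha0 harec)
  refine ⟨‖α‖ * c, fun x hx => ?_⟩
  have hx0 : x ≠ 0 := norm_pos_iff.1 (one_pos.trans_le hx)
  have hnorm : ‖x⁻¹ ^ 3‖ = ‖x‖⁻¹ ^ 3 := by rw [norm_pow, norm_inv]
  rw [truncatedP2Series_residual_eq_eval α a N hx0, norm_mul, mul_assoc]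
  gcongr
  calc ‖(p2ResidualPoly α a N).eval (x⁻¹ ^ 3)‖ ≤ c * ‖x⁻¹ ^ 3‖ ^ N :=
        hc _ (hnorm ▸ pow_le_one₀ (by positivity) (inv_le_one_of_one_le₀ hx))
    _ = c * ‖x‖ ^ (-(3 * (N : ℤ))) := by
        rw [hnorm, ← pow_mul, inv_pow, ← zpow_natCast, ← zpow_neg]
        push_cast
        rfl

/-- the truncated series `y⁽ᴺ⁾` formally solves the second Painlevé
equation `y'' = 2y³ + xy − α` up to order `x^{−3N}`, where the coefficients satisfy
`a₀ = 1`, `a_{n+1} = (3n+1)(3n+2)·a_n − 2α²·Σ_{k+l+m=n} a_k·a_l·a_m`. -/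
theorem truncatedP2Series_formal_solution (α : ℂ)
    (a : ℕ → ℂ) (ha0 : a 0 = 1)
    (harec : ∀ n : ℕ, a (n + 1) =
      (3 * (n : ℂ) + 1) * (3 * (n : ℂ) + 2) * a n -
        2 * α ^ 2 * ∑ k ∈ Finset.range (n + 1), ∑ l ∈ Finset.range (n + 1 - k),
          a k * a l * a (n - k - l))
    (N : ℕ) (hN : 1 ≤ N) :
    ∃ c : ℝ, ∀ x : ℂ, 1 ≤ ‖x‖ →
      ‖deriv (deriv (truncatedP2Series α a N)) x -
          2 * (truncatedP2Series α a N x) ^ 3 -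
          x * truncatedP2Series α a N x + α‖ ≤
        c * ‖x‖ ^ (-(3 * (N : ℤ))) :=
  truncatedP2Series_formal_solution_general α a ha0 harec N
end

section
/- Let α ∈ ℤ with α ≠ 0, and let (a_N)_{N≥0} be defined by a_0 = 1 and a_{N+1} = (3N+1)(3N+2)·a_N − 2α²·Σ_{k+l+m=N} a_k·a_l·a_m. Then the sequence grows at most exponentially: there exists C > 1 such that |a_N| ≤ C^N for all N ≥ 0. -/
/-!
The recursion only involves `α²`, so we may take `α = n > 0`. Then `v = n · Σ aₙ Xⁿ` is the formal
solution `y(x) = x⁻¹ v(x⁻³)` at infinity of `y'' = 2y³ + xy − n`. The Bäcklund transformation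
`y ↦ (2α + 1) / (2y² − 2y' + x) − y` raises `α` by one; applied `n` times to the solution `y = 0` of
`α = 0` it produces a formal solution for `α = n`, which is `v` because the formal solution is
unique. Each step only uses ring operations, the Euler operator `X d/dX` and inversion of a series
with constant term `1`, and all of these preserve geometric growth of the coefficients.
-/

open PowerSeries

theorem natCast_add_one_le_two_pow (n : ℕ) : (n : ℝ) + 1 ≤ 2 ^ (n + 1) := by
  exact_mod_cast (Nat.lt_two_pow_self (n := n + 1)).le

namespace PowerSeries

section CommSemiring

variable {R : Type*} [CommSemiring R]

theorem coeff_ofNat_mul (n a : ℕ) [a.AtLeastTwo] (f : R⟦X⟧) :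
    coeff n ((no_index (OfNat.ofNat a : R⟦X⟧)) * f) = OfNat.ofNat a * coeff n f := by
  rw [← map_ofNat C, coeff_C_mul]

theorem coeff_pow_three (f : R⟦X⟧) (n : ℕ) :
    coeff n (f ^ 3) = ∑ k ∈ Finset.range (n + 1), ∑ l ∈ Finset.range (n + 1 - k),
      coeff k f * coeff l f * coeff (n - k - l) f := by
  rw [pow_three, coeff_mul, Finset.Nat.sum_antidiagonal_eq_sum_range_succ_mk]
  refine Finset.sum_congr rfl fun k hk => ?_
  rw [coeff_mul, Finset.Nat.sum_antidiagonal_eq_sum_range_succ_mk, Finset.mul_sum,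
    Nat.sub_add_comm (Finset.mem_range_succ_iff.mp hk)]
  simp only [mul_assoc, Nat.sub_sub]

theorem coeff_eq_of_trunc_eq {f g : R⟦X⟧} {n m : ℕ} (h : trunc n f = trunc n g) (hm : m < n) :
    coeff m f = coeff m g := by
  simpa [coeff_trunc, hm] using congrArg (Polynomial.coeff · m) h

variable (R) in
noncomputable def euler : Derivation R R⟦X⟧ R⟦X⟧ := (X : R⟦X⟧) • d⁄dX R

theorem euler_apply (f : R⟦X⟧) : euler R f = X * d⁄dX R f := rfl

theorem coeff_euler (f : R⟦X⟧) (n : ℕ) : coeff n (euler R f) = n * coeff n f := by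
  rcases n with _ | n
  · simp [euler_apply]
  · rw [euler_apply, coeff_succ_X_mul, coeff_derivative, mul_comm]
    push_cast
    rfl

@[simp]
theorem euler_X : euler R X = X := by simp [euler_apply]

@[simp]
theorem euler_C (c : R) : euler R (C c) = 0 := by simp [euler_apply]

@[simp]
theorem euler_ofNat (n : ℕ) [n.AtLeastTwo] : euler R (no_index (OfNat.ofNat n : R⟦X⟧)) = 0 :=
  (euler R).map_natCast n

end CommSemiring

section Convergent

variable {𝕜 : Type*} [NormedField 𝕜]

theorem norm_coeff_mul_le {f g : 𝕜⟦X⟧} {a b : ℝ} (ha : 1 ≤ a) (hb : 1 ≤ b)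
    (hf : ∀ n, ‖coeff n f‖ ≤ a ^ (n + 1)) (hg : ∀ n, ‖coeff n g‖ ≤ b ^ (n + 1)) (n : ℕ) :
    ‖coeff n (f * g)‖ ≤ (2 * (a * b)) ^ (n + 1) := by
  have hterm : ∀ p ∈ Finset.HasAntidiagonal.antidiagonal n,
      ‖coeff p.1 f * coeff p.2 g‖ ≤ (a * b) ^ (n + 1) := by
    intro p hp
    have hsum := Finset.HasAntidiagonal.mem_antidiagonal.mp hp
    rw [norm_mul, mul_pow]
    exact mul_le_mul ((hf _).trans (pow_le_pow_right₀ ha (by omega)))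
      ((hg _).trans (pow_le_pow_right₀ hb (by omega))) (norm_nonneg _) (by positivity)
  calc ‖coeff n (f * g)‖
      ≤ ∑ _p ∈ Finset.HasAntidiagonal.antidiagonal n, (a * b) ^ (n + 1) := by
        rw [coeff_mul]
        exact norm_sum_le_of_le _ hterm
    _ = ((n : ℝ) + 1) * (a * b) ^ (n + 1) := by simp
    _ ≤ 2 ^ (n + 1) * (a * b) ^ (n + 1) := by gcongr; exact natCast_add_one_le_two_pow n
    _ = (2 * (a * b)) ^ (n + 1) := (mul_pow _ _ _).symm

/-- Over a complete field these are exactly the power series with positive radius of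
convergence. -/
noncomputable def convergent (𝕜 : Type*) [NormedField 𝕜] : Subalgebra 𝕜 𝕜⟦X⟧ where
  carrier := {f | ∃ a : ℝ, 1 ≤ a ∧ ∀ n, ‖coeff n f‖ ≤ a ^ (n + 1)}
  mul_mem' := by
    rintro f g ⟨a, ha, hf⟩ ⟨b, hb, hg⟩
    exact ⟨2 * (a * b), by nlinarith, norm_coeff_mul_le ha hb hf hg⟩
  add_mem' := by
    rintro f g ⟨a, ha, hf⟩ ⟨b, hb, hg⟩
    refine ⟨a + b, by linarith, fun n => ?_⟩
    calc ‖coeff n (f + g)‖ ≤ a ^ (n + 1) + b ^ (n + 1) :=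
          (norm_add_le _ _).trans (add_le_add (hf n) (hg n))
      _ ≤ (a + b) ^ (n + 1) := pow_add_pow_le (by linarith) (by linarith) n.succ_ne_zero
  algebraMap_mem' c := by
    refine ⟨max 1 ‖c‖, le_max_left _ _, fun n => ?_⟩
    rw [algebraMap_apply, Algebra.algebraMap_self, RingHom.id_apply, coeff_C]
    split_ifs with h
    · subst h
      simp
    · simp

theorem X_mem_convergent : X ∈ convergent 𝕜 :=
  ⟨1, le_rfl, fun n => by rw [coeff_X]; split_ifs <;> simp⟩

theorem euler_mem_convergent {f : 𝕜⟦X⟧} (hf : f ∈ convergent 𝕜) : euler 𝕜 f ∈ convergent 𝕜 := by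
  obtain ⟨a, ha, hf⟩ := hf
  refine ⟨2 * a, by linarith, fun n => ?_⟩
  have hn : ‖(n : 𝕜)‖ ≤ 2 ^ (n + 1) := by
    have := Nat.norm_cast_le (α := 𝕜) n
    rw [norm_one, mul_one] at this
    linarith [natCast_add_one_le_two_pow n]
  rw [coeff_euler, norm_mul, mul_pow]
  exact mul_le_mul hn (hf n) (norm_nonneg _) (by positivity)

theorem coeff_succ_inv {f : 𝕜⟦X⟧} (h0 : constantCoeff f = 1) (n : ℕ) :
    coeff (n + 1) f⁻¹ = -∑ i ∈ Finset.range (n + 1), coeff (i + 1) f * coeff (n - i) f⁻¹ := by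
  have h := congrArg (coeff (n + 1)) (PowerSeries.mul_inv_cancel f (by simp [h0]))
  rw [coeff_mul, Finset.Nat.sum_antidiagonal_eq_sum_range_succ_mk, Finset.sum_range_succ',
    coeff_one, if_neg n.succ_ne_zero, coeff_zero_eq_constantCoeff_apply, h0] at h
  simp only [Nat.add_sub_add_right, Nat.sub_zero, one_mul] at h
  linear_combination h

theorem norm_coeff_inv_le {f : 𝕜⟦X⟧} (h0 : constantCoeff f = 1) {a : ℝ} (ha : 1 ≤ a)
    (hf : ∀ n, ‖coeff n f‖ ≤ a ^ (n + 1)) (n : ℕ) : ‖coeff n f⁻¹‖ ≤ (a ^ 2 + a) ^ n := by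
  induction n using Nat.strong_induction_on with
  | _ n ih =>
  rcases n with _ | n
  · simp [h0]
  have hterm : ∀ i ∈ Finset.range (n + 1),
      ‖coeff (i + 1) f * coeff (n - i) f⁻¹‖ ≤ a ^ (i + 2) * (a ^ 2 + a) ^ (n - i) := by
    intro i hi
    rw [norm_mul]
    exact mul_le_mul (hf _) (ih _ (by omega)) (norm_nonneg _) (by positivity)
  have hgeom := geom_sum₂_mul a (a ^ 2 + a) (n + 1)
  simp only [Nat.add_sub_cancel] at hgeom
  calc ‖coeff (n + 1) f⁻¹‖
      ≤ ∑ i ∈ Finset.range (n + 1), a ^ (i + 2) * (a ^ 2 + a) ^ (n - i) := by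
        rw [coeff_succ_inv h0, norm_neg]
        exact norm_sum_le_of_le _ hterm
    _ = (∑ i ∈ Finset.range (n + 1), a ^ i * (a ^ 2 + a) ^ (n - i)) * a ^ 2 := by
        rw [Finset.sum_mul]
        exact Finset.sum_congr rfl fun i _ => by ring
    _ = (a ^ 2 + a) ^ (n + 1) - a ^ (n + 1) := by linear_combination -hgeom
    _ ≤ (a ^ 2 + a) ^ (n + 1) := by linarith [pow_pos (by linarith : (0 : ℝ) < a) (n + 1)]

theorem inv_mem_convergent {f : 𝕜⟦X⟧} (h0 : constantCoeff f = 1) (hf : f ∈ convergent 𝕜) :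
    f⁻¹ ∈ convergent 𝕜 := by
  obtain ⟨a, ha, hf⟩ := hf
  refine ⟨a ^ 2 + a, by nlinarith, fun n => ?_⟩
  exact (norm_coeff_inv_le h0 ha hf n).trans (pow_le_pow_right₀ (by nlinarith) n.le_succ)

theorem exists_norm_coeff_le_pow {f : 𝕜⟦X⟧} (hf : f ∈ convergent 𝕜)
    (h0 : ‖constantCoeff f‖ ≤ 1) : ∃ C > (1 : ℝ), ∀ n, ‖coeff n f‖ ≤ C ^ n := by
  obtain ⟨a, ha, hf⟩ := hf
  refine ⟨a ^ 2 + 1, by nlinarith, fun n => ?_⟩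
  rcases n with _ | n
  · simpa using h0
  calc ‖coeff (n + 1) f‖ ≤ a ^ (2 * (n + 1)) := (hf _).trans (pow_le_pow_right₀ ha (by omega))
    _ = (a ^ 2) ^ (n + 1) := pow_mul a 2 (n + 1)
    _ ≤ (a ^ 2 + 1) ^ (n + 1) := by gcongr; linarith

end Convergent

end PowerSeries

section PainleveII

variable {R : Type*} [CommRing R]

local notation "θ" => PowerSeries.euler R

/-- With `X = x⁻³`, this says that `y(x) = x⁻¹ v(x⁻³)` solves `y'' = 2y³ + xy − c`. -/
def IsPainleveII (c : R) (v : R⟦X⟧) : Prop :=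
  v = C c + X * (9 * θ (θ v) + 9 * θ v + 2 * v - 2 * v ^ 3)

/-- `(2y² − 2y' + x) / x` in the variables of `IsPainleveII`, the denominator of the Bäcklund
transformation. -/
noncomputable def painleveDenom (v : R⟦X⟧) : R⟦X⟧ := 1 + 2 * X * (v + 3 * θ v + v ^ 2)

theorem isPainleveII_iff_coeff {c : R} {v : R⟦X⟧} :
    IsPainleveII c v ↔ coeff 0 v = c ∧ ∀ n : ℕ,
      coeff (n + 1) v = (3 * n + 1) * (3 * n + 2) * coeff n v - 2 * coeff n (v ^ 3) := by
  rw [IsPainleveII, PowerSeries.ext_iff, ← Nat.and_forall_add_one]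
  simp only [map_add, map_sub, coeff_C, coeff_zero_X_mul, coeff_succ_X_mul, coeff_ofNat_mul,
    coeff_euler]
  refine and_congr (by simp) (forall_congr' fun n => ?_)
  simp only [Nat.add_one_ne_zero, if_false, zero_add]
  constructor <;> intro h <;> linear_combination h

theorem IsPainleveII.unique {c : R} {v w : R⟦X⟧} (hv : IsPainleveII c v)
    (hw : IsPainleveII c w) : v = w := by
  rw [isPainleveII_iff_coeff] at hv hw
  suffices h : ∀ n, trunc n v = trunc n w from
    PowerSeries.ext fun n => coeff_eq_of_trunc_eq (h (n + 1)) n.lt_succ_self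
  intro n
  induction n with
  | zero => simp
  | succ n ih =>
    rw [trunc_succ, trunc_succ, ih]
    congr 2
    rcases n with _ | m
    · rw [hv.1, hw.1]
    · have hcube : trunc (m + 1) (v ^ 3) = trunc (m + 1) (w ^ 3) := by
        rw [← trunc_trunc_pow, ih, trunc_trunc_pow]
      rw [hv.2, hw.2, coeff_eq_of_trunc_eq ih m.lt_succ_self,
        coeff_eq_of_trunc_eq hcube m.lt_succ_self]

theorem isPainleveII_smul_mk {c : R} {a : ℕ → R} (ha0 : a 0 = 1)
    (harec : ∀ n : ℕ, a (n + 1) = (3 * (n : R) + 1) * (3 * (n : R) + 2) * a n -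
      2 * c ^ 2 * ∑ k ∈ Finset.range (n + 1), ∑ l ∈ Finset.range (n + 1 - k),
        a k * a l * a (n - k - l)) :
    IsPainleveII c (c • mk a) := by
  refine isPainleveII_iff_coeff.mpr ⟨by simp [ha0], fun n => ?_⟩
  simp only [smul_pow, coeff_smul, coeff_pow_three, coeff_mk, smul_eq_mul, harec n]
  ring

theorem three_euler_painleveDenom {c : R} {v : R⟦X⟧} (hv : IsPainleveII c v) :
    3 * θ (painleveDenom v) = (1 + 2 * v) * painleveDenom v - C (2 * c + 1) := by
  unfold IsPainleveII at hv
  simp only [painleveDenom, map_add, Derivation.map_one_eq_zero, euler_ofNat, map_one,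
    Derivation.leibniz, Derivation.leibniz_pow, euler_X, map_ofNat, smul_eq_mul, map_mul]
  linear_combination (-2) * hv

theorem isUnit_painleveDenom (v : R⟦X⟧) : IsUnit (painleveDenom v) := by
  simp [isUnit_iff_constantCoeff, painleveDenom]

theorem three_euler_eq_of_mul_painleveDenom {c : R} {v s : R⟦X⟧} (hv : IsPainleveII c v)
    (hs : s * painleveDenom v = C (2 * c + 1)) : 3 * θ s = s * (s - 1 - 2 * v) := by
  have hθ := congrArg θ hs
  rw [Derivation.leibniz, euler_C, smul_eq_mul, smul_eq_mul] at hθ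
  refine (isUnit_painleveDenom v).mul_left_cancel ?_
  linear_combination 3 * hθ - s * three_euler_painleveDenom hv - s * hs

theorem IsPainleveII.backlund {c : R} {v s : R⟦X⟧} (hv : IsPainleveII c v)
    (hs : s * painleveDenom v = C (2 * c + 1)) : IsPainleveII (c + 1) (s - v) := by
  have hT := three_euler_eq_of_mul_painleveDenom hv hs
  have hT' := congrArg θ hT
  unfold IsPainleveII at hv ⊢
  unfold painleveDenom at hs
  simp only [map_add, map_sub, map_mul, map_ofNat, map_one, Derivation.map_one_eq_zero,
    euler_ofNat, Derivation.leibniz, smul_eq_mul] at hT' hs ⊢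
  linear_combination (-1) * hv - 3 * X * hT' - 2 * X * (s - v + 1) * hT + hs

end PainleveII

section ConvergentSolutions

variable {𝕜 : Type*} [NormedField 𝕜]

theorem painleveDenom_mem_convergent {v : 𝕜⟦X⟧} (hv : v ∈ convergent 𝕜) :
    painleveDenom v ∈ convergent 𝕜 := by
  have h2 : (2 : 𝕜⟦X⟧) ∈ convergent 𝕜 := ofNat_mem _ 2
  have h3 : (3 : 𝕜⟦X⟧) ∈ convergent 𝕜 := ofNat_mem _ 3
  unfold painleveDenom
  refine add_mem (one_mem _) (mul_mem (mul_mem h2 X_mem_convergent) ?_)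
  exact add_mem (add_mem hv (mul_mem h3 (euler_mem_convergent hv))) (pow_mem hv 2)

theorem exists_isPainleveII_natCast_mem_convergent (n : ℕ) :
    ∃ v ∈ convergent 𝕜, IsPainleveII (n : 𝕜) v := by
  induction n with
  | zero => exact ⟨0, zero_mem _, by simp [IsPainleveII]⟩
  | succ n ih =>
    obtain ⟨v, hv_mem, hv⟩ := ih
    set s := C (2 * (n : 𝕜) + 1) * (painleveDenom v)⁻¹
    have hs : s * painleveDenom v = C (2 * (n : 𝕜) + 1) := by
      rw [mul_assoc, PowerSeries.inv_mul_cancel _ (by simp [painleveDenom]), mul_one]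
    have hs_mem : s ∈ convergent 𝕜 := mul_mem
      (by simpa using (convergent 𝕜).algebraMap_mem (2 * (n : 𝕜) + 1))
      (inv_mem_convergent (by simp [painleveDenom]) (painleveDenom_mem_convergent hv_mem))
    exact ⟨s - v, sub_mem hs_mem hv_mem, by simpa using hv.backlund hs⟩

end ConvergentSolutions

/-- for nonzero integer `α`, the coefficients of the asymptotic series of
the (rational) degenerate second Painlevé transcendent grow at most exponentially. -/
theorem painleveII_coefficients_integer_alpha (α : ℤ) (hα0 : α ≠ 0)
    (a : ℕ → ℂ) (ha0 : a 0 = 1)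
    (harec : ∀ n : ℕ, a (n + 1) =
      (3 * (n : ℂ) + 1) * (3 * (n : ℂ) + 2) * a n -
        2 * (α : ℂ) ^ 2 * ∑ k ∈ Finset.range (n + 1), ∑ l ∈ Finset.range (n + 1 - k),
          a k * a l * a (n - k - l)) :
    ∃ C > (1 : ℝ), ∀ N : ℕ, ‖a N‖ ≤ C ^ N := by
  have hsq : ((α.natAbs : ℂ)) ^ 2 = (α : ℂ) ^ 2 := by
    rw [← Int.cast_natCast, ← Int.cast_pow, Int.natAbs_sq, Int.cast_pow]
  have hne : (α.natAbs : ℂ) ≠ 0 := by simpa using hα0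
  obtain ⟨v, hv_mem, hv⟩ := exists_isPainleveII_natCast_mem_convergent (𝕜 := ℂ) α.natAbs
  have hva : (α.natAbs : ℂ) • mk a = v :=
    (isPainleveII_smul_mk ha0 (by simpa only [hsq] using harec)).unique hv
  have hmem : mk a ∈ convergent ℂ := by
    have := Subalgebra.smul_mem _ hv_mem (α.natAbs : ℂ)⁻¹
    rwa [← hva, inv_smul_smul₀ hne] at this
  simpa using exists_norm_coeff_le_pow hmem (by simp [ha0])
end

section
/- Let α ∈ ℂ with cos(πα) ≠ 0, and let s₁, s₃ ∈ ℂ satisfy s₁ + s₃ = −2·sin(πα). Define the 2×2 complex matrices S₁ = [[1, 0], [s₁, 1]], S₃ = [[1, 0], [s₃, 1]], σ₂ = [[0, −i], [i, 0]], and M = i·e^{iπα·σ₃}·σ₁ = [[0, i·e^{iπα}], [i·e^{−iπα}, 0]]. Then a 2×2 complex matrix E with det E = 1 satisfies the connection relation E·S₁·S₃ = σ₂·M^{−1}·E·σ₂ if and only if there exist p, q ∈ ℂ with p·q = −1/(2i·cos(πα)) such that E = [[p, 0], [0, q]] · [[1, i·e^{−iπα}], [1, −i·e^{iπα}]]. 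-/
open Complex Matrix

/-!
Write `e = exp(iπα)`. Then `σ₂ M⁻¹ = diag(-e⁻¹, e)` and `s₁ + s₃ = i(e - e⁻¹)`, so the connection
relation reads `E [[1, 0], [i(e - e⁻¹), 1]] = diag(-e⁻¹, e) E σ₂`. Its off-diagonal entries say
that the rows of `E` are multiples of `(1, ie⁻¹)` and `(1, -ie)`, and for such `E` the diagonal
entries hold automatically. The determinant of `diag(p, q) [[1, ie⁻¹], [1, -ie]]` is
`-i(e + e⁻¹)pq = -2i cos(πα) pq`, which gives the constraint on `pq`.
-/

lemma lowerUnitriangular_mul_lowerUnitriangular {R : Type*} [Semiring R] (a b : R) :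
    !![(1 : R), 0; a, 1] * !![(1 : R), 0; b, 1] = !![1, 0; a + b, 1] := by
  simp

lemma sigma2_mul_inv_antidiag {e : ℂ} (he : e ≠ 0) :
    !![(0 : ℂ), -I; I, 0] * !![(0 : ℂ), I * e; I * e⁻¹, 0]⁻¹ = !![-e⁻¹, 0; 0, e] := by
  have hinv : !![(0 : ℂ), I * e; I * e⁻¹, 0]⁻¹ = !![0, -I * e; -I * e⁻¹, 0] := by
    refine inv_eq_right_inv ?_
    simp [one_fin_two, mul_mul_mul_comm I e, mul_mul_mul_comm I e⁻¹, he]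
  rw [hinv]
  simp [← mul_assoc]

lemma exists_eq_diagonal_mul_iff {R : Type*} [CommSemiring R] (u v : R)
    (E : Matrix (Fin 2) (Fin 2) R) :
    (∃ p q : R, E = !![p, 0; 0, q] * !![1, u; 1, v]) ↔
      E 0 1 = u * E 0 0 ∧ E 1 1 = v * E 1 0 := by
  constructor
  · rintro ⟨p, q, rfl⟩
    simp [mul_comm]
  · rintro ⟨h01, h11⟩
    refine ⟨E 0 0, E 1 0, ?_⟩
    rw [eta_fin_two E, h01, h11]
    simp [mul_comm]

lemma connection_relation_iff {e s : ℂ} (he : e ≠ 0) (hs : s = I * (e - e⁻¹))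
    (E : Matrix (Fin 2) (Fin 2) ℂ) :
    E * !![1, 0; s, 1] = !![-e⁻¹, 0; 0, e] * E * !![(0 : ℂ), -I; I, 0] ↔
      E 0 1 = I * e⁻¹ * E 0 0 ∧ E 1 1 = -I * e * E 1 0 := by
  rw [eta_fin_two E]
  have hinv : e * e⁻¹ = 1 := mul_inv_cancel₀ he
  simp only [mul_fin_two, mul_one, mul_zero, zero_add, zero_mul, add_zero, mul_neg, of_apply,
    cons_val', cons_val_zero, cons_val_one, cons_val_fin_one, EmbeddingLike.apply_eq_iff_eq,
    vecCons_inj, and_true]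
  constructor
  · rintro ⟨⟨-, h01⟩, -, h11⟩
    exact ⟨by linear_combination h01, by linear_combination h11⟩
  · rintro ⟨h01, h11⟩
    refine ⟨⟨?_, by linear_combination h01⟩, ?_, by linear_combination h11⟩
    · rw [h01, hs]
      linear_combination E 0 0 * e * e⁻¹ * I_sq - E 0 0 * hinv
    · rw [h11, hs]
      linear_combination E 1 0 * e * e⁻¹ * I_sq - E 1 0 * hinv

lemma det_diagonal_mul_connection (p q e : ℂ) :
    (!![p, 0; 0, q] * !![1, I * e⁻¹; 1, -I * e]).det = -I * (e + e⁻¹) * (p * q) := by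
  simp [det_fin_two]; ring

theorem painleveII_connection_matrix_general (α : ℂ)
    (s₁ s₃ : ℂ) (hs : s₁ + s₃ = -2 * Complex.sin ((Real.pi : ℂ) * α))
    (E : Matrix (Fin 2) (Fin 2) ℂ) (hE : E.det = 1) :
    (E * !![(1 : ℂ), 0; s₁, 1] * !![(1 : ℂ), 0; s₃, 1] =
        !![(0 : ℂ), -Complex.I; Complex.I, 0] *
          (!![(0 : ℂ), Complex.I * Complex.exp (Complex.I * (Real.pi : ℂ) * α);
              Complex.I * Complex.exp (-(Complex.I * (Real.pi : ℂ) * α)), 0])⁻¹ *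
          E * !![(0 : ℂ), -Complex.I; Complex.I, 0]) ↔
      ∃ p q : ℂ, p * q = -1 / (2 * Complex.I * Complex.cos ((Real.pi : ℂ) * α)) ∧
        E = !![p, 0; 0, q] *
          !![(1 : ℂ), Complex.I * Complex.exp (-(Complex.I * (Real.pi : ℂ) * α));
             1, -Complex.I * Complex.exp (Complex.I * (Real.pi : ℂ) * α)] := by
  rw [Complex.exp_neg]
  set e := exp (I * (Real.pi : ℂ) * α) with he_def
  have he : e ≠ 0 := exp_ne_zero _
  have hexp : exp ((Real.pi : ℂ) * α * I) = e := by rw [he_def]; congr 1; ring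
  have hsin : s₁ + s₃ = I * (e - e⁻¹) := by
    have h := two_sin ((Real.pi : ℂ) * α)
    rw [neg_mul, Complex.exp_neg, hexp] at h
    linear_combination hs - h
  have hcos : 2 * I * cos ((Real.pi : ℂ) * α) = I * (e + e⁻¹) := by
    rw [mul_right_comm, two_cos, neg_mul, Complex.exp_neg, hexp, mul_comm]
  rw [Matrix.mul_assoc E, lowerUnitriangular_mul_lowerUnitriangular, sigma2_mul_inv_antidiag he,
    connection_relation_iff he hsin, ← exists_eq_diagonal_mul_iff, hcos]
  constructor
  · rintro ⟨p, q, rfl⟩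
    rw [det_diagonal_mul_connection] at hE
    have hc : I * (e + e⁻¹) ≠ 0 := by
      rintro h
      rw [neg_mul, h] at hE
      simp at hE
    exact ⟨p, q, by rw [eq_div_iff hc]; linear_combination -hE, rfl⟩
  · rintro ⟨p, q, -, hpq⟩
    exact ⟨p, q, hpq⟩

/-- characterization of the connection matrix of the degenerate (s₂ = 0)
Riemann–Hilbert problem for P2. With `S₁ = [[1,0],[s₁,1]]`, `S₃ = [[1,0],[s₃,1]]`,
`σ₂ = [[0,−i],[i,0]]`, `M = [[0, i·e^{iπα}],[i·e^{−iπα}, 0]]`, and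
`s₁ + s₃ = −2 sin(πα)`, a unimodular matrix `E` satisfies `E·S₁·S₃ = σ₂·M⁻¹·E·σ₂`
iff `E = [[p,0],[0,q]]·[[1, i·e^{−iπα}],[1, −i·e^{iπα}]]` with
`p·q = −1/(2i·cos(πα))`. -/
theorem painleveII_connection_matrix (α : ℂ)
    (hcos : Complex.cos ((Real.pi : ℂ) * α) ≠ 0)
    (s₁ s₃ : ℂ) (hs : s₁ + s₃ = -2 * Complex.sin ((Real.pi : ℂ) * α))
    (E : Matrix (Fin 2) (Fin 2) ℂ) (hE : E.det = 1) :
    (E * !![(1 : ℂ), 0; s₁, 1] * !![(1 : ℂ), 0; s₃, 1] =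
        !![(0 : ℂ), -Complex.I; Complex.I, 0] *
          (!![(0 : ℂ), Complex.I * Complex.exp (Complex.I * (Real.pi : ℂ) * α);
              Complex.I * Complex.exp (-(Complex.I * (Real.pi : ℂ) * α)), 0])⁻¹ *
          E * !![(0 : ℂ), -Complex.I; Complex.I, 0]) ↔
      ∃ p q : ℂ, p * q = -1 / (2 * Complex.I * Complex.cos ((Real.pi : ℂ) * α)) ∧
        E = !![p, 0; 0, q] *
          !![(1 : ℂ), Complex.I * Complex.exp (-(Complex.I * (Real.pi : ℂ) * α));
             1, -Complex.I * Complex.exp (Complex.I * (Real.pi : ℂ) * α)] :=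
  painleveII_connection_matrix_general α s₁ s₃ hs E hE
end
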